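/- arXiv:1707.09163 — 3 statements merged into one kernel-verified Lean document; each statement's English description precedes it below -/
import Mathlib

section
/- Let H be a complex Hilbert space, V a subspace, and B : V × V → ℂ a sesquilinear form such that B(g,g) is real and B(g,g) ≥ α ‖g‖_V² for all g ∈ V (α > 0), where ‖·‖_V ≥ ‖·‖_H. Fix γ ∈ (0, π/2) and μ ≥ 0, and let z ∈ ℂ with γ ≤ |arg z| ≤ π. If g ∈ V satisfies -z(g,φ) + B(g,φ) + μ(g,φ) = (v,φ) for all φ ∈ V, then ‖g‖_H ≤ C_γ/(|z| + μ) ‖v‖_H with C_γ = (sin(γ/2))^{-1}. -/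
/-!
Testing the equation with `φ = g` gives `⟪g, v⟫ = b - z a` with `a = ‖g‖²` and
`b = B(g, g) + μ ‖g‖² ≥ μ a` real and nonnegative. Since `z` lies at angle at least `γ` from the
positive real axis, `|b - z a| ≥ sin (γ / 2) (|z| a + b)`, and Cauchy–Schwarz bounds the left
side by `‖g‖ ‖v‖`.
-/

open Complex

lemma Complex.re_le_norm_mul_cos_of_le_abs_arg {z : ℂ} {γ : ℝ} (hγ : 0 ≤ γ)
    (hz : γ ≤ |z.arg|) : z.re ≤ ‖z‖ * Real.cos γ := by
  have hcos : Real.cos z.arg ≤ Real.cos γ := by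
    rw [← Real.cos_abs z.arg]
    exact Real.cos_le_cos_of_nonneg_of_le_pi hγ (abs_arg_le_pi z) hz
  calc z.re = ‖z‖ * Real.cos z.arg := (norm_mul_cos_arg z).symm
    _ ≤ ‖z‖ * Real.cos γ := mul_le_mul_of_nonneg_left hcos (norm_nonneg z)

lemma Complex.sin_half_mul_norm_add_le_norm_sub {w : ℂ} {t γ : ℝ} (ht : 0 ≤ t)
    (hw : w.re ≤ ‖w‖ * Real.cos γ) :
    Real.sin (γ / 2) * (‖w‖ + t) ≤ ‖(t : ℂ) - w‖ := by
  set s := Real.sin (γ / 2)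
  have hcos : Real.cos γ = 1 - 2 * s ^ 2 := by
    have := Real.cos_two_mul' (γ / 2)
    rw [mul_div_cancel₀ γ two_ne_zero, Real.cos_sq'] at this
    linarith
  have hnorm_sq : ‖w‖ ^ 2 = w.re ^ 2 + w.im ^ 2 := by
    rw [Complex.sq_norm, normSq_apply]; ring
  have hdiff_sq : ‖(t : ℂ) - w‖ ^ 2 = (t - w.re) ^ 2 + w.im ^ 2 := by
    rw [Complex.sq_norm, normSq_apply]; simp; ring
  -- `‖t - w‖² - s²(‖w‖ + t)² ≥ (1 - s²)(‖w‖ - t)²` once `Re w ≤ ‖w‖ (1 - 2 s²)`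
  have hsq : (s * (‖w‖ + t)) ^ 2 ≤ ‖(t : ℂ) - w‖ ^ 2 := by
    rw [hcos] at hw
    have h1 : 0 ≤ (1 - s ^ 2) * (‖w‖ - t) ^ 2 :=
      mul_nonneg (by nlinarith [Real.sin_sq_le_one (γ / 2)]) (sq_nonneg _)
    have h2 : 0 ≤ (‖w‖ * (1 - 2 * s ^ 2) - w.re) * t := mul_nonneg (by linarith) ht
    nlinarith
  exact (le_abs_self _).trans (abs_le_of_sq_le_sq hsq (norm_nonneg _))

lemma Complex.sin_half_mul_norm_mul_add_le_norm_sub {z : ℂ} {γ a b : ℝ} (hγ : 0 ≤ γ)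
    (hz : γ ≤ |z.arg|) (ha : 0 ≤ a) (hb : 0 ≤ b) :
    Real.sin (γ / 2) * (‖z‖ * a + b) ≤ ‖(b : ℂ) - z * a‖ := by
  have hnorm : ‖z * a‖ = ‖z‖ * a := by rw [norm_mul, norm_real, Real.norm_of_nonneg ha]
  have hsector : (z * a).re ≤ ‖z * a‖ * Real.cos γ := by
    rw [hnorm, re_mul_ofReal, mul_right_comm]
    exact mul_le_mul_of_nonneg_right (re_le_norm_mul_cos_of_le_abs_arg hγ hz) ha
  simpa only [hnorm] using sin_half_mul_norm_add_le_norm_sub hb hsector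

lemma le_inv_mul_of_mul_sq_le_mul {c x y : ℝ} (hc : 0 < c) (hx : 0 ≤ x) (hy : 0 ≤ y)
    (h : c * x ^ 2 ≤ x * y) : x ≤ c⁻¹ * y := by
  rw [le_inv_mul_iff₀ hc]
  rcases hx.eq_or_lt with rfl | hx
  · simpa using hy
  · nlinarith

theorem stmt_1_general {H : Type*} [NormedAddCommGroup H] [InnerProductSpace ℂ H]
    (V : Submodule ℂ H) (NV : H → ℝ) (B : H → H → ℂ) (α γ μ : ℝ) (z : ℂ) (g v : H)
    (hα : 0 < α) (hγ0 : 0 < γ) (hμ : 0 ≤ μ)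
    (hBreal : ∀ u ∈ V, (B u u).im = 0)
    (hBcoer : ∀ u ∈ V, α * NV u ^ 2 ≤ (B u u).re)
    (hz1 : γ ≤ |z.arg|)
    (hg : g ∈ V)
    (heq : ∀ φ ∈ V, -z * (inner ℂ φ g : ℂ) + B g φ + (μ : ℂ) * (inner ℂ φ g : ℂ) = (inner ℂ φ v : ℂ)) :
    ‖g‖ ≤ (Real.sin (γ / 2))⁻¹ / (‖z‖ + μ) * ‖v‖ := by
  have hs : 0 < Real.sin (γ / 2) :=
    Real.sin_pos_of_pos_of_lt_pi (by positivity) (by linarith [abs_arg_le_pi z, Real.pi_pos])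
  have hz : z ≠ 0 := by rintro rfl; simp at hz1; linarith
  set a := ‖g‖ ^ 2
  set b := (B g g).re + μ * a
  have hb : μ * a ≤ b := by nlinarith [hBcoer g hg, sq_nonneg (NV g)]
  have htest : inner ℂ g v = (b : ℂ) - z * a := by
    have hgg : inner ℂ g g = (a : ℂ) := by simp [a]
    rw [← heq g hg, hgg, ← re_add_im (B g g), hBreal g hg]
    simp only [b]
    push_cast
    ring
  have key : Real.sin (γ / 2) * (‖z‖ + μ) * ‖g‖ ^ 2 ≤ ‖g‖ * ‖v‖ :=
    calc Real.sin (γ / 2) * (‖z‖ + μ) * ‖g‖ ^ 2 ≤ Real.sin (γ / 2) * (‖z‖ * a + b) := by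
          rw [mul_assoc]; gcongr; linarith
      _ ≤ ‖(b : ℂ) - z * a‖ := sin_half_mul_norm_mul_add_le_norm_sub hγ0.le hz1
          (sq_nonneg _) ((mul_nonneg hμ (sq_nonneg _)).trans hb)
      _ = ‖inner ℂ g v‖ := by rw [htest]
      _ ≤ ‖g‖ * ‖v‖ := norm_inner_le_norm g v
  rw [div_eq_mul_inv, ← mul_inv]
  have hc : 0 < Real.sin (γ / 2) * (‖z‖ + μ) :=
    mul_pos hs (add_pos_of_pos_of_nonneg (norm_pos_iff.2 hz) hμ)
  exact le_inv_mul_of_mul_sq_le_mul hc (norm_nonneg g) (norm_nonneg v) key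

theorem stmt_1 {H : Type*} [NormedAddCommGroup H] [InnerProductSpace ℂ H] [CompleteSpace H]
    (V : Submodule ℂ H) (NV : H → ℝ) (B : H → H → ℂ) (α γ μ : ℝ) (z : ℂ) (g v : H)
    (hα : 0 < α) (hγ0 : 0 < γ) (hγ : γ < Real.pi / 2) (hμ : 0 ≤ μ)
    (hN : ∀ u ∈ V, ‖u‖ ≤ NV u)
    (hBreal : ∀ u ∈ V, (B u u).im = 0)
    (hBcoer : ∀ u ∈ V, α * NV u ^ 2 ≤ (B u u).re)
    (hz1 : γ ≤ |z.arg|) (hz2 : |z.arg| ≤ Real.pi)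
    (hg : g ∈ V)
    (heq : ∀ φ ∈ V, -z * (inner ℂ φ g : ℂ) + B g φ + (μ : ℂ) * (inner ℂ φ g : ℂ) = (inner ℂ φ v : ℂ)) :
    ‖g‖ ≤ (Real.sin (γ / 2))⁻¹ / (‖z‖ + μ) * ‖v‖ :=
  stmt_1_general V NV B α γ μ z g v hα hγ0 hμ hBreal hBcoer hz1 hg heq
end

section
/- Let 0 = t_0 < t_1 < ⋯ < t_M = T with k_j = t_j - t_{j-1} and suppose max_{l ≤ j ≤ m} k_j < (t_m - t_{l-1})/2 for fixed 1 ≤ l ≤ m ≤ M. Then for every λ > 0, λ² ∏_{j=l}^{m} (1 + k_j λ)^{-1} ≤ 4/(t_m - t_{l-1})². -/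
/-!
Expanding `∏ (1 + x_i)` for `x_i ≥ 0` and keeping only the terms of degree at most two gives
`∏ (1 + x_i) ≥ 1 + S + (S² - ∑ x_i²)/2` with `S = ∑ x_i`. For `x_j = k_j λ` with every step
`k_j ≤ D/2`, where `D = ∑ k_j = t_m - t_{l-1}`, one has `∑ k_j² ≤ (D/2) ∑ k_j = D²/2`, hence
`∏ (1 + k_j λ) ≥ 1 + Dλ + (Dλ)²/4 ≥ (Dλ)²/4`, which is the claim after inverting.
-/

open Finset

theorem one_add_sum_add_half_sq_sub_sum_sq_le_prod_one_add {ι : Type*} (s : Finset ι)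
    {x : ι → ℝ} (hx : ∀ i ∈ s, 0 ≤ x i) :
    1 + ∑ i ∈ s, x i + ((∑ i ∈ s, x i) ^ 2 - ∑ i ∈ s, x i ^ 2) / 2 ≤ ∏ i ∈ s, (1 + x i) := by
  induction s using Finset.cons_induction with
  | empty => simp
  | cons a s ha ih =>
    have hxa : 0 ≤ x a := hx a (mem_cons_self a s)
    have hxs : ∀ i ∈ s, 0 ≤ x i := fun i hi => hx i (mem_cons_of_mem hi)
    have hsq := sum_sq_le_sq_sum_of_nonneg hxs
    have hsum := sum_nonneg hxs
    rw [sum_cons, sum_cons, prod_cons]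
    nlinarith [ih hxs]

theorem one_add_mul_add_sq_div_four_le_prod_one_add_mul {ι : Type*} (s : Finset ι)
    {k : ι → ℝ} (hk : ∀ i ∈ s, 0 ≤ k i) (hkmax : ∀ i ∈ s, k i ≤ (∑ j ∈ s, k j) / 2)
    {lam : ℝ} (hlam : 0 ≤ lam) :
    1 + (∑ i ∈ s, k i) * lam + ((∑ i ∈ s, k i) * lam) ^ 2 / 4 ≤ ∏ i ∈ s, (1 + k i * lam) := by
  set D := ∑ i ∈ s, k i
  have hsq : ∑ i ∈ s, k i ^ 2 ≤ D ^ 2 / 2 :=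
    calc ∑ i ∈ s, k i ^ 2 ≤ ∑ i ∈ s, D / 2 * k i :=
          sum_le_sum fun i hi => by rw [sq]; exact mul_le_mul_of_nonneg_right (hkmax i hi) (hk i hi)
      _ = D ^ 2 / 2 := by rw [← mul_sum]; ring
  have key := one_add_sum_add_half_sq_sub_sum_sq_le_prod_one_add s
    (x := fun i => k i * lam) fun i hi => mul_nonneg (hk i hi) hlam
  simp only [mul_pow, ← sum_mul] at key
  nlinarith [mul_le_mul_of_nonneg_right hsq (sq_nonneg lam)]

theorem sq_mul_prod_inv_one_add_mul_le {ι : Type*} (s : Finset ι)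
    {k : ι → ℝ} (hk : ∀ i ∈ s, 0 ≤ k i) (hkmax : ∀ i ∈ s, k i ≤ (∑ j ∈ s, k j) / 2)
    (hD : 0 < ∑ i ∈ s, k i) {lam : ℝ} (hlam : 0 ≤ lam) :
    lam ^ 2 * ∏ i ∈ s, (1 + k i * lam)⁻¹ ≤ 4 / (∑ i ∈ s, k i) ^ 2 := by
  have hP := one_add_mul_add_sq_div_four_le_prod_one_add_mul s hk hkmax hlam
  have hDlam : 0 ≤ (∑ i ∈ s, k i) * lam := mul_nonneg hD.le hlam
  rw [prod_inv_distrib, ← div_eq_mul_inv, div_le_div_iff₀ (by nlinarith) (by positivity)]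
  nlinarith

theorem sum_Icc_sub_pred {t : ℕ → ℝ} {l m : ℕ} (hlm : l ≤ m) :
    ∑ j ∈ Icc l m, (t j - t (j - 1)) = t m - t (l - 1) := by
  induction m, hlm using Nat.le_induction with
  | base => simp
  | succ n hn ih =>
    rw [sum_Icc_succ_top (hn.trans n.le_succ), ih]
    simp

theorem stmt_5_general (M : ℕ) (t : ℕ → ℝ) (l m : ℕ)
    (hmono : ∀ j, j < M → t j < t (j+1))
    (hlm : l ≤ m) (hm : m ≤ M)
    (hkmax : ∀ j ∈ Finset.Icc l m, t j - t (j-1) < (t m - t (l-1)) / 2) :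
    ∀ lam : ℝ, 0 < lam →
      lam^2 * ∏ j ∈ Finset.Icc l m, (1 + (t j - t (j-1)) * lam)⁻¹
        ≤ 4 / (t m - t (l-1))^2 := by
  intro lam hlam
  have hk : ∀ j ∈ Icc l m, 0 ≤ t j - t (j - 1) := by
    intro j hj
    cases j with
    | zero => simp
    | succ j => exact sub_nonneg.2 (hmono j (by grind)).le
  have hD : 0 < t m - t (l - 1) := by
    have hl_mem : l ∈ Icc l m := left_mem_Icc.2 hlm
    linarith [hk l hl_mem, hkmax l hl_mem]
  rw [← sum_Icc_sub_pred hlm] at hkmax hD ⊢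
  exact sq_mul_prod_inv_one_add_mul_le _ hk (fun j hj => (hkmax j hj).le) hD hlam.le

theorem stmt_5 (M : ℕ) (t : ℕ → ℝ) (l m : ℕ)
    (ht0 : t 0 = 0) (hmono : ∀ j, j < M → t j < t (j+1))
    (hl : 1 ≤ l) (hlm : l ≤ m) (hm : m ≤ M)
    (hkmax : ∀ j ∈ Finset.Icc l m, t j - t (j-1) < (t m - t (l-1)) / 2) :
    ∀ lam : ℝ, 0 < lam →
      lam^2 * ∏ j ∈ Finset.Icc l m, (1 + (t j - t (j-1)) * lam)⁻¹
        ≤ 4 / (t m - t (l-1))^2 :=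
  stmt_5_general M t l m hmono hlm hm hkmax
end

section
/- Let 0 = t_0 < t_1 < ⋯ < t_M = T with k_j = t_j - t_{j-1}, and suppose there is κ > 0 with κ^{-1} ≤ k_j/k_{j+1} ≤ κ for all 1 ≤ j ≤ M-1. Fix 1 ≤ l < m ≤ M and set k_max = max_{l ≤ j ≤ m} k_j. If k_max ≥ (t_m - t_{l-1})/2, then for every λ > 0, λ² ∏_{j=l}^{m} (1 + k_j λ)^{-1} ≤ C/(t_m - t_{l-1})², where C depends only on κ. -/
/-!
Every factor `(1 + kⱼλ)⁻¹` is at most `1`, so the product is bounded by the two factors at the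
longest step `j₀` and at a neighbour `j₁` of it inside `[l, m]`, and
`λ² (1 + aλ)⁻¹ (1 + bλ)⁻¹ ≤ (ab)⁻¹`. Quasi-uniformity gives `k_{j₀} ≤ κ k_{j₁}`, and
`k_{j₀} ≥ (t_m - t_{l-1}) / 2`, so `(k_{j₀} k_{j₁})⁻¹ ≤ κ / k_{j₀}² ≤ 4κ / (t_m - t_{l-1})²`.
-/

open Finset

lemma Finset.prod_le_mul_of_le_one {ι R : Type*} [CommMonoidWithZero R] [PartialOrder R]
    [ZeroLEOneClass R] [PosMulMono R] {s : Finset ι} {f : ι → R} {i j : ι}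
    (hi : i ∈ s) (hj : j ∈ s) (hij : i ≠ j)
    (h0 : ∀ x ∈ s, 0 ≤ f x) (h1 : ∀ x ∈ s, f x ≤ 1) :
    ∏ x ∈ s, f x ≤ f i * f j := by
  classical
  rw [← prod_pair hij]
  exact prod_le_prod_of_subset_of_le_one (by simp [insert_subset_iff, hi, hj]) h0
    fun x hx _ ↦ h1 x hx

lemma sq_mul_inv_one_add_mul_mul_inv_one_add_mul_le {a b lam : ℝ} (ha : 0 < a) (hb : 0 < b)
    (hlam : 0 < lam) :
    lam ^ 2 * ((1 + a * lam)⁻¹ * (1 + b * lam)⁻¹) ≤ (a * b)⁻¹ :=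
  calc lam ^ 2 * ((1 + a * lam)⁻¹ * (1 + b * lam)⁻¹)
      ≤ lam ^ 2 * ((a * lam)⁻¹ * (b * lam)⁻¹) := by
        gcongr <;> linarith
    _ = (a * b)⁻¹ := by field_simp

lemma exists_ne_le_mul_of_ratio_le {κ : ℝ} (hκ : 0 < κ) {k : ℕ → ℝ} {l m j₀ : ℕ}
    (hlm : l < m) (hj₀ : j₀ ∈ Icc l m) (hk : ∀ j ∈ Icc l m, 0 < k j)
    (hratio : ∀ j, l ≤ j → j < m → κ⁻¹ ≤ k j / k (j + 1) ∧ k j / k (j + 1) ≤ κ) :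
    ∃ j₁ ∈ Icc l m, j₁ ≠ j₀ ∧ k j₀ ≤ κ * k j₁ := by
  obtain ⟨hlj₀, hj₀m⟩ := mem_Icc.mp hj₀
  rcases hj₀m.lt_or_eq with hj₀m | rfl
  · have hpos := hk (j₀ + 1) (mem_Icc.mpr ⟨by omega, hj₀m⟩)
    refine ⟨j₀ + 1, mem_Icc.mpr ⟨by omega, hj₀m⟩, by omega, ?_⟩
    have := (hratio j₀ hlj₀ hj₀m).2
    rwa [div_le_iff₀ hpos] at this
  · have hpos := hk j₀ hj₀
    have hprev := hk (j₀ - 1) (mem_Icc.mpr ⟨by omega, by omega⟩)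
    refine ⟨j₀ - 1, mem_Icc.mpr ⟨by omega, by omega⟩, by omega, ?_⟩
    have := (hratio (j₀ - 1) (by omega) (by omega)).1
    rw [Nat.sub_add_cancel (by omega), inv_le_iff_one_le_mul₀ hκ, div_mul_eq_mul_div,
      one_le_div hpos] at this
    linarith

lemma inv_mul_le_four_mul_div_sq {κ D a b : ℝ} (hκ : 0 < κ) (hD : 0 < D) (ha : D / 2 ≤ a)
    (hab : a ≤ κ * b) : (a * b)⁻¹ ≤ 4 * κ / D ^ 2 := by
  have ha₀ : 0 < a := by linarith
  have hb : 0 < b := pos_of_mul_pos_right (ha₀.trans_le hab) hκ.le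
  rw [inv_le_iff_one_le_mul₀ (by positivity), ← mul_div_right_comm, one_le_div (by positivity)]
  nlinarith

theorem stmt_6 (κ : ℝ) (hκ : 0 < κ) :
    ∃ C > 0, ∀ (M : ℕ) (t : ℕ → ℝ) (l m : ℕ),
      t 0 = 0 → (∀ j, j < M → t j < t (j+1)) →
      (∀ j, 1 ≤ j → j ≤ M - 1 →
        κ⁻¹ ≤ (t j - t (j-1)) / (t (j+1) - t j) ∧
          (t j - t (j-1)) / (t (j+1) - t j) ≤ κ) →
      1 ≤ l → l < m → m ≤ M →
      (∃ j ∈ Finset.Icc l m, (t m - t (l-1)) / 2 ≤ t j - t (j-1) ∧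
          ∀ i ∈ Finset.Icc l m, t i - t (i-1) ≤ t j - t (j-1)) →
      ∀ lam : ℝ, 0 < lam →
        lam^2 * ∏ j ∈ Finset.Icc l m, (1 + (t j - t (j-1)) * lam)⁻¹
          ≤ C / (t m - t (l-1))^2 := by
  refine ⟨4 * κ, by positivity, ?_⟩
  rintro M t l m - hinc hratio hl hlm hm ⟨j₀, hj₀, hj₀_ge, -⟩ lam hlam
  set k : ℕ → ℝ := fun j ↦ t j - t (j - 1) with hk_def
  have ht : StrictMonoOn t (Set.Iic M) := strictMonoOn_Iic_of_lt_succ hinc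
  have hk : ∀ j ∈ Icc l m, 0 < k j := fun j hj ↦ by
    obtain ⟨hlj, hjm⟩ := mem_Icc.mp hj
    exact sub_pos.mpr (ht (by simp; omega) (by simp; omega) (by omega))
  have hD : 0 < t m - t (l - 1) := sub_pos.mpr (ht (by simp; omega) (by simpa) (by omega))
  obtain ⟨j₁, hj₁, hne, hj₀j₁⟩ := exists_ne_le_mul_of_ratio_le hκ hlm hj₀ hk
    fun j hlj hjm ↦ by simpa [hk_def] using hratio j (by omega) (by omega)
  have hfactor : ∀ j ∈ Icc l m, 0 < (1 + k j * lam)⁻¹ := fun j hj ↦ by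
    have := hk j hj; positivity
  calc lam ^ 2 * ∏ j ∈ Icc l m, (1 + k j * lam)⁻¹
      ≤ lam ^ 2 * ((1 + k j₀ * lam)⁻¹ * (1 + k j₁ * lam)⁻¹) := by
        gcongr
        refine prod_le_mul_of_le_one hj₀ hj₁ hne.symm (fun j hj ↦ (hfactor j hj).le) fun j hj ↦ ?_
        have := hk j hj
        exact inv_le_one_of_one_le₀ (by nlinarith)
    _ ≤ (k j₀ * k j₁)⁻¹ := sq_mul_inv_one_add_mul_mul_inv_one_add_mul_le (hk j₀ hj₀) (hk j₁ hj₁) hlam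
    _ ≤ 4 * κ / (t m - t (l - 1)) ^ 2 := inv_mul_le_four_mul_div_sq hκ hD hj₀_ge hj₀j₁
end
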